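/- For all s ∈ (0,1) and constant p ∈ (0, 1/2], there exists c > 0 such that with probability tending to 1 as n → ∞, any two distinct satisfying assignments of the random XOR-formula Q^p(n, sn) differ on at least c·n variables (i.e., the solution space is Ω(n)-separated). -/

import Mathlib

open MeasureTheory Filter

/-- The Bernoulli measure on `Bool` with parameter `p` (truncated to `[0,1]`). -/
noncomputable def bern (p : ℝ) : Measure Bool :=
  (PMF.bernoulli (min (Real.toNNReal p) 1) (min_le_right _ _)).toMeasure

instance (p : ℝ) : IsProbabilityMeasure (bern p) := PMF.toMeasure.isProbabilityMeasure _

/-- A random XOR-clause over `n` variables: each variable is included independently with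
probability `p`, and the constant bit `1` is included with probability `1/2`. -/
noncomputable def clauseM (n : ℕ) (p : ℝ) : Measure ((Fin n → Bool) × Bool) :=
  (Measure.pi fun _ : Fin n => bern p).prod (bern (1/2))

instance (n : ℕ) (p : ℝ) : IsProbabilityMeasure (clauseM n p) := by
  unfold clauseM; infer_instance

/-- The random XOR-formula `Q^p(n, m)`: `m` independent random XOR-clauses. -/
noncomputable def formulaM (n m : ℕ) (p : ℝ) : Measure (Fin m → (Fin n → Bool) × Bool) :=
  Measure.pi fun _ : Fin m => clauseM n p

/-- An XOR-clause `(S, b)` is satisfied by `σ` iff the number of included variables set to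
true, plus the constant bit, is odd. -/
def xorSat {n : ℕ} (c : (Fin n → Bool) × Bool) (σ : Fin n → Bool) : Prop :=
  Odd ((∑ i, if c.1 i && σ i then (1 : ℕ) else 0) + (if c.2 then 1 else 0))

/-!
If two distinct solutions `σ, τ` of the formula are close, their difference set `D` is small and
nonempty, and every clause meets `D` in an even number of variables. For a fixed nonempty `D` a
random clause does so with probability `(1 + (1 - 2p)^|D|)/2 ≤ 1 - p`, independently over the
`m ≥ sn` clauses. A union bound over the sets `D` with `|D| ≤ cn`, counted by the exponential
moment bound `#{D : |D| ≤ r} ≤ e^{tr} (1 + e^{-t})^n`, bounds the failure probability by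
`exp((tc + e^{-t} - ps) n)`, which tends to `0` once `t` is large and `c` is small.
-/

open Finset Real Topology

lemma integral_bern {p : ℝ} (hp0 : 0 ≤ p) (hp1 : p ≤ 1) (f : Bool → ℝ) :
    ∫ b, f b ∂bern p = p * f true + (1 - p) * f false := by
  simp [bern, PMF.integral_eq_sum, PMF.bernoulli_apply, hp0, hp1]

lemma measureReal_pi_bern_even_card {ι : Type*} [Fintype ι] [DecidableEq ι] (D : Finset ι)
    {p : ℝ} (hp0 : 0 ≤ p) (hp1 : p ≤ 1) :
    (Measure.pi fun _ : ι => bern p).real {S | Even #{i ∈ D | S i}}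
      = (1 + (1 - 2 * p) ^ #D) / 2 := by
  -- The indicator of `Even k` is `(1 + (-1)^k) / 2`, and `(-1)^#{i ∈ D | S i}` is a product of
  -- independent coordinate factors, each of mean `1 - 2p` on `D`.
  let χ : ι → Bool → ℝ := fun i b => if i ∈ D ∧ b then -1 else 1
  have hχ : ∀ S : ι → Bool, ∏ i, χ i (S i) = (-1) ^ #{i ∈ D | S i} := by
    intro S
    rw [prod_ite, prod_const, prod_const_one, mul_one]
    congr 2
    ext i
    simp
  have hind : ∀ S : ι → Bool, {S : ι → Bool | Even #{i ∈ D | S i}}.indicator 1 S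
      = (1 + ∏ i, χ i (S i)) / 2 := by
    intro S
    rw [hχ]
    rcases Nat.even_or_odd #{i ∈ D | S i} with h | h
    · simp [h, h.neg_one_pow]
    · simp [Nat.not_even_iff_odd.mpr h, h.neg_one_pow]
  have hmeas : MeasurableSet {S : ι → Bool | Even #{i ∈ D | S i}} := (Set.toFinite _).measurableSet
  rw [← integral_indicator_one hmeas, integral_congr_ae (Eventually.of_forall hind),
    integral_div, integral_add (integrable_const _) (Integrable.of_finite),
    integral_fintype_prod_eq_prod]
  simp [χ, integral_bern hp0 hp1, ite_add]
  ring

lemma measure_pi_bern_even_card_le {ι : Type*} [Fintype ι] [DecidableEq ι] {D : Finset ι}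
    (hD : D.Nonempty) {p : ℝ} (hp0 : 0 ≤ p) (hp : p ≤ 1 / 2) :
    (Measure.pi fun _ : ι => bern p) {S | Even #{i ∈ D | S i}} ≤ ENNReal.ofReal (1 - p) := by
  rw [← ofReal_measureReal, measureReal_pi_bern_even_card D hp0 (by linarith)]
  refine ENNReal.ofReal_le_ofReal ?_
  have : (1 - 2 * p) ^ #D ≤ 1 - 2 * p :=
    pow_le_of_le_one (by linarith) (by linarith) hD.card_pos.ne'
  linarith

lemma clauseM_even_card_le {n : ℕ} {D : Finset (Fin n)} (hD : D.Nonempty) {p : ℝ}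
    (hp0 : 0 ≤ p) (hp : p ≤ 1 / 2) :
    clauseM n p {c | Even #{i ∈ D | c.1 i}} ≤ ENNReal.ofReal (1 - p) := by
  have : {c : (Fin n → Bool) × Bool | Even #{i ∈ D | c.1 i}}
      = {S | Even #{i ∈ D | S i}} ×ˢ Set.univ := by
    ext; simp
  rw [clauseM, this, Measure.prod_prod, measure_univ, mul_one]
  exact measure_pi_bern_even_card_le hD hp0 hp

instance (n m : ℕ) (p : ℝ) : IsProbabilityMeasure (formulaM n m p) := by
  unfold formulaM; infer_instance

lemma formulaM_forall_mem (n m : ℕ) (p : ℝ) (A : Set ((Fin n → Bool) × Bool)) :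
    formulaM n m p {Q | ∀ j, Q j ∈ A} = clauseM n p A ^ m := by
  have : {Q : Fin m → (Fin n → Bool) × Bool | ∀ j, Q j ∈ A} = Set.univ.pi fun _ => A := by
    ext; simp
  rw [formulaM, this, Measure.pi_pi, prod_const, card_univ, Fintype.card_fin]

lemma xorSat.even_card_filter_ne {n : ℕ} {c : (Fin n → Bool) × Bool} {σ τ : Fin n → Bool}
    (hσ : xorSat c σ) (hτ : xorSat c τ) : Even #{i ∈ ({i | σ i ≠ τ i} : Finset _) | c.1 i} := by
  have hsplit : (∑ i, if c.1 i && σ i then 1 else 0) + (∑ i, if c.1 i && τ i then 1 else 0)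
      = #{i ∈ ({i | σ i ≠ τ i} : Finset _) | c.1 i}
        + 2 * ∑ i, if c.1 i && σ i && τ i then 1 else 0 := by
    rw [filter_filter, card_filter, ← sum_add_distrib, mul_sum, ← sum_add_distrib]
    refine sum_congr rfl fun i _ => ?_
    cases c.1 i <;> cases σ i <;> cases τ i <;> rfl
  unfold xorSat at hσ hτ
  rw [Nat.odd_iff] at hσ hτ
  rw [Nat.even_iff]
  omega

lemma card_filter_card_le_le_exp {α : Type*} [Fintype α] {t : ℝ} (ht : 0 ≤ t) (r : ℝ) :
    (#{D : Finset α | (#D : ℝ) ≤ r} : ℝ) ≤ exp (t * r) * (1 + exp (-t)) ^ Fintype.card α := by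
  calc (#{D : Finset α | (#D : ℝ) ≤ r} : ℝ)
      = ∑ D : Finset α with (#D : ℝ) ≤ r, 1 := by simp
    _ ≤ ∑ D : Finset α with (#D : ℝ) ≤ r, exp (t * r) * exp (-t) ^ #D := by
      refine sum_le_sum fun D hD => ?_
      rw [← Real.exp_nat_mul, ← Real.exp_add]
      exact Real.one_le_exp (by nlinarith [(mem_filter.1 hD).2])
    _ ≤ ∑ D : Finset α, exp (t * r) * exp (-t) ^ #D :=
      sum_le_sum_of_subset_of_nonneg (filter_subset _ _) fun _ _ _ => by positivity
    _ = exp (t * r) * (1 + exp (-t)) ^ Fintype.card α := by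
      rw [← mul_sum, add_comm, ← Fintype.sum_pow_mul_eq_add_pow]
      simp

def separatedFormulas (n m : ℕ) (r : ℝ) : Set (Fin m → (Fin n → Bool) × Bool) :=
  {Q | ∀ σ τ : Fin n → Bool, (∀ j, xorSat (Q j) σ) → (∀ j, xorSat (Q j) τ) →
    σ ≠ τ → r ≤ (hammingDist σ τ : ℝ)}

lemma compl_separatedFormulas_subset (n m : ℕ) (r : ℝ) :
    (separatedFormulas n m r)ᶜ ⊆ ⋃ D ∈ ({D | D.Nonempty ∧ (#D : ℝ) ≤ r} : Finset (Finset (Fin n))),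
      {Q | ∀ j, Q j ∈ {c : (Fin n → Bool) × Bool | Even #{i ∈ D | c.1 i}}} := by
  intro Q hQ
  simp only [separatedFormulas, Set.mem_compl_iff, Set.mem_setOf_eq, not_forall, not_le] at hQ
  obtain ⟨σ, τ, hσ, hτ, hστ, hdist⟩ := hQ
  obtain ⟨i, hi⟩ := Function.ne_iff.1 hστ
  simp only [Set.mem_iUnion, Set.mem_setOf_eq]
  exact ⟨({i | σ i ≠ τ i} : Finset _), mem_filter.2 ⟨mem_univ _, ⟨i, by simpa using hi⟩, hdist.le⟩,
    fun j => (hσ j).even_card_filter_ne (hτ j)⟩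

lemma formulaM_compl_separatedFormulas_le (n m : ℕ) {p : ℝ} (hp0 : 0 ≤ p) (hp : p ≤ 1 / 2)
    {t : ℝ} (ht : 0 ≤ t) (r : ℝ) :
    formulaM n m p (separatedFormulas n m r)ᶜ
      ≤ ENNReal.ofReal (exp (t * r) * (1 + exp (-t)) ^ n * (1 - p) ^ m) := by
  set 𝒟 : Finset (Finset (Fin n)) := {D | D.Nonempty ∧ (#D : ℝ) ≤ r}
  have hcard : (#𝒟 : ℝ) ≤ exp (t * r) * (1 + exp (-t)) ^ n := by
    have hsub : 𝒟 ⊆ ({D | (#D : ℝ) ≤ r} : Finset (Finset (Fin n))) :=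
      monotone_filter_right _ fun _ _ hD => hD.2
    simpa using (Nat.cast_le.2 (card_le_card hsub)).trans (card_filter_card_le_le_exp ht r)
  calc formulaM n m p (separatedFormulas n m r)ᶜ
      ≤ ∑ D ∈ 𝒟, formulaM n m p {Q | ∀ j, Q j ∈ {c | Even #{i ∈ D | c.1 i}}} :=
        (measure_mono (compl_separatedFormulas_subset n m r)).trans (measure_biUnion_finset_le _ _)
    _ ≤ ∑ _D ∈ 𝒟, ENNReal.ofReal (1 - p) ^ m := by
        refine sum_le_sum fun D hD => ?_
        rw [formulaM_forall_mem]
        exact pow_le_pow_left' (clauseM_even_card_le (mem_filter.1 hD).2.1 hp0 hp) m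
    _ ≤ ENNReal.ofReal (exp (t * r) * (1 + exp (-t)) ^ n * (1 - p) ^ m) := by
        rw [sum_const, nsmul_eq_mul, ENNReal.ofReal_mul (by positivity),
          ENNReal.ofReal_pow (by linarith), ← ENNReal.ofReal_natCast]
        gcongr

lemma exp_mul_one_add_exp_neg_pow_mul_le {p s : ℝ} (hp0 : 0 ≤ p) (hp1 : p ≤ 1) {n m : ℕ}
    (hm : s * n ≤ m) (t c : ℝ) :
    exp (t * (c * n)) * (1 + exp (-t)) ^ n * (1 - p) ^ m
      ≤ exp ((t * c + exp (-t) - p * s) * n) := by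
  have h1 : (1 + exp (-t)) ^ n ≤ exp (exp (-t) * n) := by
    rw [mul_comm, Real.exp_nat_mul]
    gcongr
    linarith [Real.add_one_le_exp (exp (-t))]
  have h2 : (1 - p) ^ m ≤ exp (-(p * s * n)) := calc
    (1 - p) ^ m ≤ exp (-p) ^ m := pow_le_pow_left₀ (by linarith) (Real.one_sub_le_exp_neg p) m
    _ = exp (-(p * m)) := by rw [← Real.exp_nat_mul]; ring_nf
    _ ≤ exp (-(p * s * n)) :=
      Real.exp_le_exp.2 (by linarith [mul_le_mul_of_nonneg_left hm hp0])
  calc exp (t * (c * n)) * (1 + exp (-t)) ^ n * (1 - p) ^ m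
      ≤ exp (t * (c * n)) * exp (exp (-t) * n) * exp (-(p * s * n)) := by gcongr
    _ = exp ((t * c + exp (-t) - p * s) * n) := by rw [← Real.exp_add, ← Real.exp_add]; ring_nf

lemma exists_pos_mul_add_exp_neg_lt {a : ℝ} (ha : 0 < a) :
    ∃ c > 0, ∃ t ≥ 0, t * c + exp (-t) < a := by
  set t := |Real.log a| + 1
  have ht : 0 < t := by positivity
  have hexp : exp (-t) < a := by
    calc exp (-t) < exp (Real.log a) := Real.exp_lt_exp.2 (by linarith [neg_abs_le (Real.log a)])
      _ = a := Real.exp_log ha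
  refine ⟨(a - exp (-t)) / (2 * t), div_pos (by linarith) (by positivity), t, ht.le, ?_⟩
  field_simp
  linarith

/-- For all `s ∈ (0,1)` and constant `p ∈ (0,1/2]`, there is `c > 0` such that w.h.p.
any two distinct satisfying assignments of `Q^p(n, sn)` differ on at least `c·n`
variables. -/
theorem whp_linearly_separated_const (s p : ℝ)
    (hs : s ∈ Set.Ioo (0:ℝ) 1) (hp : p ∈ Set.Ioc (0:ℝ) (1/2)) :
    ∃ c : ℝ, 0 < c ∧
      Tendsto (fun n : ℕ =>
        formulaM n ⌈s * (n:ℝ)⌉₊ p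
          {Q | ∀ σ τ : Fin n → Bool, (∀ j, xorSat (Q j) σ) → (∀ j, xorSat (Q j) τ) →
            σ ≠ τ → c * n ≤ (hammingDist σ τ : ℝ)})
        atTop (nhds 1) := by
  obtain ⟨hp0, hp⟩ := hp
  obtain ⟨c, hc, t, ht, hct⟩ := exists_pos_mul_add_exp_neg_lt (mul_pos hp0 hs.1)
  refine ⟨c, hc, ?_⟩
  set m : ℕ → ℕ := fun n => ⌈s * (n:ℝ)⌉₊
  have hκ : t * c + exp (-t) - p * s < 0 := by linarith
  have hexp : Tendsto (fun n : ℕ => ENNReal.ofReal (exp ((t * c + exp (-t) - p * s) * n)))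
      atTop (𝓝 0) := by
    simpa using ENNReal.tendsto_ofReal (Real.tendsto_exp_atBot.comp
      (tendsto_natCast_atTop_atTop.const_mul_atTop_of_neg hκ))
  have hbad : Tendsto (fun n => formulaM n (m n) p (separatedFormulas n (m n) (c * n))ᶜ)
      atTop (𝓝 0) :=
    tendsto_of_tendsto_of_tendsto_of_le_of_le tendsto_const_nhds hexp (fun _ => bot_le)
      fun n => (formulaM_compl_separatedFormulas_le n (m n) hp0.le hp ht _).trans
        (ENNReal.ofReal_le_ofReal (exp_mul_one_add_exp_neg_pow_mul_le hp0.le (by linarith)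
          (Nat.le_ceil _) t c))
  have hgood : ∀ n, formulaM n (m n) p (separatedFormulas n (m n) (c * n))
      = 1 - formulaM n (m n) p (separatedFormulas n (m n) (c * n))ᶜ := fun n => by
    rw [prob_compl_eq_one_sub (Set.toFinite _).measurableSet,
      ENNReal.sub_sub_cancel ENNReal.one_ne_top prob_le_one]
  show Tendsto (fun n => formulaM n (m n) p (separatedFormulas n (m n) (c * n))) atTop (𝓝 1)
  simp_rw [hgood]
  simpa using ENNReal.Tendsto.sub tendsto_const_nhds hbad (.inl ENNReal.one_ne_top)
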